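/- Let φ(t) = (1/√(2π)) exp(−t²/2) be the standard normal density and Φ(x) = ∫_{−∞}^{x} φ(t) dt the standard normal cumulative distribution function, and define h : ℝ → ℝ by h(x) = x·Φ(x) + φ(x). Then x² h(x)/φ(x) tends to 1 as x tends to −∞. -/

import Mathlib

/-!
Only `φ' = -x φ`, `Φ' = φ` and `h' = Φ` matter, and l'Hôpital's rule at `-∞` is applied twice.
First `Φ(x) / (-φ(x)/x) → 1` (the Mills ratio), since `(-φ(x)/x)' = φ(x) (1 + x⁻²)`.
Then `h(x) / (φ(x)/x²) → 1`, since `(φ(x)/x²)' = -φ(x) x⁻¹ (1 + 2x⁻²)`, so the quotient of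
derivatives is the Mills ratio divided by `1 + 2x⁻²`; that `h → 0` also follows from the
Mills ratio, as `h = φ (1 - (-x Φ / φ))`.
-/

open Filter MeasureTheory Set Real Topology

lemma hasDerivAt_integral_Iic {E : Type*} [NormedAddCommGroup E] [NormedSpace ℝ E]
    [CompleteSpace E] {f : ℝ → E} (hf : Integrable f) {x : ℝ} (hx : ContinuousAt f x) :
    HasDerivAt (fun y => ∫ t in Iic y, f t) (f x) x := by
  have hsplit : (fun y => ∫ t in Iic y, f t) = fun y => (∫ t in Iic 0, f t) + ∫ t in 0..y, f t := by
    ext y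
    rw [← intervalIntegral.integral_Iic_sub_Iic hf.integrableOn hf.integrableOn]
    abel
  rw [hsplit]
  exact (intervalIntegral.integral_hasDerivAt_right hf.intervalIntegrable
    hf.aestronglyMeasurable.stronglyMeasurableAtFilter hx).const_add _

lemma hasDerivAt_mul_exp_neg_sq_div_two (c x : ℝ) :
    HasDerivAt (fun t => c * exp (-t ^ 2 / 2)) (-x * (c * exp (-x ^ 2 / 2))) x := by
  have := (((hasDerivAt_pow 2 x).fun_neg.div_const 2).exp).const_mul c
  exact this.congr_deriv (by push_cast; ring)

lemma tendsto_mul_exp_neg_sq_div_two_atBot (c : ℝ) :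
    Tendsto (fun t => c * exp (-t ^ 2 / 2)) atBot (𝓝 0) := by
  have hsq : Tendsto (fun t : ℝ => t ^ 2) atBot atTop :=
    ((tendsto_pow_atTop two_ne_zero).comp tendsto_neg_atBot_atTop).congr fun t => by simp
  have hexp := tendsto_exp_atBot.comp ((tendsto_neg_atTop_atBot.comp hsq).atBot_div_const two_pos)
  simpa using hexp.const_mul c

lemma tendsto_one_add_mul_inv_sq_atBot (c : ℝ) :
    Tendsto (fun x : ℝ => 1 + c * x⁻¹ ^ 2) atBot (𝓝 1) := by
  simpa using ((tendsto_inv_atBot_zero.pow 2).const_mul c).const_add 1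

section

variable {φ Φ : ℝ → ℝ}

lemma tendsto_millsRatio_atBot (hφ : ∀ x, HasDerivAt φ (-x * φ x) x) (hφ_ne : ∀ x, φ x ≠ 0)
    (hφ_tendsto : Tendsto φ atBot (𝓝 0)) (hΦ : ∀ x, HasDerivAt Φ (φ x) x)
    (hΦ_tendsto : Tendsto Φ atBot (𝓝 0)) :
    Tendsto (fun x => -x * Φ x / φ x) atBot (𝓝 1) := by
  have hg : ∀ x ≠ 0, HasDerivAt (fun y => -(φ y / y)) (φ x * (1 + 1 * x⁻¹ ^ 2)) x := fun x hx =>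
    ((hφ x).div (hasDerivAt_id' x) hx).fun_neg.congr_deriv (by field_simp; ring)
  have hg_tendsto : Tendsto (fun y => -(φ y / y)) atBot (𝓝 0) := by
    simpa [div_eq_mul_inv] using (hφ_tendsto.mul tendsto_inv_atBot_zero).neg
  have hquot : Tendsto (fun x => Φ x / -(φ x / x)) atBot (𝓝 1) := by
    refine HasDerivAt.lhopital_zero_atBot (Eventually.of_forall hΦ)
      ((eventually_ne_atBot 0).mono hg) ?_ hΦ_tendsto hg_tendsto ?_
    · exact Eventually.of_forall fun x => mul_ne_zero (hφ_ne x) (by positivity)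
    · have hlim := (tendsto_one_add_mul_inv_sq_atBot 1).inv₀ one_ne_zero
      rw [inv_one] at hlim
      refine hlim.congr fun x => ?_
      have := hφ_ne x
      field_simp
  refine hquot.congr' ?_
  filter_upwards [eventually_ne_atBot 0] with x hx
  have := hφ_ne x
  field_simp

lemma tendsto_sq_mul_div_atBot (hφ : ∀ x, HasDerivAt φ (-x * φ x) x) (hφ_ne : ∀ x, φ x ≠ 0)
    (hφ_tendsto : Tendsto φ atBot (𝓝 0)) (hΦ : ∀ x, HasDerivAt Φ (φ x) x)
    (hΦ_tendsto : Tendsto Φ atBot (𝓝 0)) :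
    Tendsto (fun x => x ^ 2 * (x * Φ x + φ x) / φ x) atBot (𝓝 1) := by
  have hmills := tendsto_millsRatio_atBot hφ hφ_ne hφ_tendsto hΦ hΦ_tendsto
  have hh : ∀ x, HasDerivAt (fun y => y * Φ y + φ y) (Φ x) x := fun x =>
    (((hasDerivAt_id' x).mul (hΦ x)).add (hφ x)).congr_deriv (by ring)
  have hh_tendsto : Tendsto (fun x => x * Φ x + φ x) atBot (𝓝 0) := by
    have hlim := hφ_tendsto.mul ((tendsto_const_nhds (x := (1 : ℝ))).sub hmills)
    rw [sub_self, mul_zero] at hlim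
    refine hlim.congr fun x => ?_
    have := hφ_ne x
    field_simp
    ring
  have hg : ∀ x ≠ 0, HasDerivAt (fun y => φ y / y ^ 2) (-φ x * x⁻¹ * (1 + 2 * x⁻¹ ^ 2)) x :=
    fun x hx => ((hφ x).div (hasDerivAt_pow 2 x) (by positivity)).congr_deriv (by field_simp; ring)
  have hg_tendsto : Tendsto (fun y => φ y / y ^ 2) atBot (𝓝 0) := by
    simpa [div_eq_mul_inv] using hφ_tendsto.mul (tendsto_inv_atBot_zero.pow 2)
  have hquot : Tendsto (fun x => (x * Φ x + φ x) / (φ x / x ^ 2)) atBot (𝓝 1) := by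
    refine HasDerivAt.lhopital_zero_atBot (Eventually.of_forall hh)
      ((eventually_ne_atBot 0).mono hg) ?_ hh_tendsto hg_tendsto ?_
    · filter_upwards [eventually_ne_atBot 0] with x hx
      exact mul_ne_zero (mul_ne_zero (neg_ne_zero.2 (hφ_ne x)) (inv_ne_zero hx)) (by positivity)
    · have hlim := hmills.div (tendsto_one_add_mul_inv_sq_atBot 2) one_ne_zero
      rw [div_one] at hlim
      refine hlim.congr' ?_
      filter_upwards [eventually_ne_atBot 0] with x hx
      have := hφ_ne x
      rw [Pi.div_apply]
      field_simp
  refine hquot.congr' ?_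
  filter_upwards [eventually_ne_atBot 0] with x hx
  have := hφ_ne x
  field_simp

end

theorem stmt_13 (φ Φ h : ℝ → ℝ)
    (hφ : ∀ t, φ t = (1 / Real.sqrt (2 * Real.pi)) * Real.exp (-t ^ 2 / 2))
    (hΦ : ∀ x, Φ x = ∫ t in Set.Iic x, φ t)
    (hh : ∀ x, h x = x * Φ x + φ x) :
    Tendsto (fun x : ℝ => x ^ 2 * h x / φ x) atBot (nhds 1) := by
  obtain rfl : h = fun x => x * Φ x + φ x := funext hh
  obtain rfl : Φ = fun x => ∫ t in Iic x, φ t := funext hΦ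
  obtain rfl : φ = fun t => 1 / √(2 * π) * exp (-t ^ 2 / 2) := funext hφ
  have hφ_int : Integrable fun t => 1 / √(2 * π) * exp (-t ^ 2 / 2) := by
    simpa [neg_div, ← div_mul_eq_mul_div, div_eq_inv_mul] using
      (integrable_exp_neg_mul_sq (b := 1 / 2) (by norm_num)).const_mul (1 / √(2 * π))
  exact tendsto_sq_mul_div_atBot (hasDerivAt_mul_exp_neg_sq_div_two _) (fun x => by positivity)
    (tendsto_mul_exp_neg_sq_div_two_atBot _)
    (fun x => hasDerivAt_integral_Iic hφ_int (by fun_prop)) (tendsto_integral_Iic_zero tendsto_id)
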